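/- Let F_ε(·,·) be the localised functionals and, for a sequence ε_k ↓ 0, let F'(·,U) and F''(·,U) be the sequential Γ-liminf and Γ-limsup of F_{ε_k}(·,U) with respect to convergence in Ω ∩ εP, and let F'_-, F''_- be their inner regular envelopes in the set variable. Then for every sequence of positive numbers decreasing to zero there exists a subsequence (ε_k) such that F'_- = F''_- on L¹(Ω) × 𝒜(Ω). -/

import Mathlib

open MeasureTheory Filter Set
open scoped ENNReal NNReal Topology Pointwise

noncomputable section

attribute [local instance] Classical.propDecidable

/-- Euclidean `n`-space. -/
abbrev Euc (n : ℕ) : Type := EuclideanSpace ℝ (Fin n)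

/-- The open cube centred at the origin with side length `r`. -/
def cube (n : ℕ) (r : ℝ) : Set (Euc n) := {x | ∀ i, |x i| < r / 2}

/-- The periodic matrix `P = ℝⁿ \ ⋃_{k ∈ ℤⁿ} (k + Q_{1/2})`. -/
def Pset (n : ℕ) : Set (Euc n) :=
  {x | ∀ k : Fin n → ℤ, ∃ i, (1 : ℝ) / 4 ≤ |x i - (k i : ℝ)|}

/-- The `(n-1)`-dimensional Hausdorff measure on `ℝⁿ`. -/
def haus (n : ℕ) : Measure (Euc n) := μH[(n : ℝ) - 1]

/-- `Ω ⊆ ℝⁿ` has Lipschitz boundary: near every boundary point, after an isometry,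
`Ω` coincides with the region above the graph of a Lipschitz function. -/
def IsLipschitzDomain (n : ℕ) (Ω : Set (Euc n)) : Prop :=
  ∀ x ∈ frontier Ω, ∃ r : ℝ, 0 < r ∧ ∃ (O : Euc n ≃ₗᵢ[ℝ] Euc n) (i : Fin n)
    (φ : Euc n → ℝ) (L : ℝ≥0), LipschitzWith L φ ∧
      (∀ y z : Euc n, (∀ j, j ≠ i → y j = z j) → φ y = φ z) ∧
      (∀ y ∈ Metric.ball x r, (y ∈ Ω ↔ φ (O y) < O y i))

/-- Abstract data describing the `(G)SBV` framework: membership predicates for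
`GSBV²(U)`, `SBV²(U)` and `SBV^pc(U)`, the approximate gradient `∇u`, the jump set `S_u`,
the jump opening `[u] = u⁺ - u⁻` and the normal `ν_u` to the jump set. -/
structure FDData (n : ℕ) where
  memGSBV2 : Set (Euc n) → (Euc n → ℝ) → Prop
  memSBV2 : Set (Euc n) → (Euc n → ℝ) → Prop
  memPC : Set (Euc n) → (Euc n → ℝ) → Prop
  agrad : (Euc n → ℝ) → Euc n → Euc n
  jumpSet : (Euc n → ℝ) → Set (Euc n)
  jump : (Euc n → ℝ) → Euc n → ℝ
  normal : (Euc n → ℝ) → Euc n → Euc n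

variable {n : ℕ}

/-- The high-contrast Mumford–Shah energy
`F_ε(u) = ∫_Ω |∇u|² + H^{n-1}(S_u ∩ (Ω ∩ εP)) + β_ε H^{n-1}(S_u ∩ (Ω \ εP))`. -/
def Feps (D : FDData n) (Ω : Set (Euc n)) (β ε : ℝ) (u : Euc n → ℝ) : ℝ≥0∞ :=
  if D.memGSBV2 Ω u then
    (∫⁻ x in Ω, ENNReal.ofReal (‖D.agrad u x‖ ^ 2)) +
      haus n (D.jumpSet u ∩ (Ω ∩ ε • Pset n)) +
      ENNReal.ofReal β * haus n (D.jumpSet u ∩ (Ω \ ε • Pset n))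
  else ⊤

/-- The localised energy `F_ε(u, U)`. -/
def FepsLoc (D : FDData n) (β ε : ℝ) (u : Euc n → ℝ) (U : Set (Euc n)) : ℝ≥0∞ :=
  if D.memGSBV2 U u then
    (∫⁻ x in U, ENNReal.ofReal (‖D.agrad u x‖ ^ 2)) +
      haus n (D.jumpSet u ∩ (U ∩ ε • Pset n)) +
      ENNReal.ofReal β * haus n (D.jumpSet u ∩ (U \ ε • Pset n))
  else ⊤

/-- Convergence of `(u_k)` to `u` in `Ω ∩ εP`: there are `L¹(Ω)` functions `v_k`
with `v_k = u_k` on `Ω ∩ ε_k P` and `v_k → u` strongly in `L¹(Ω)`. -/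
def ConvPerf (Ω : Set (Euc n)) (εs : ℕ → ℝ) (us : ℕ → Euc n → ℝ) (u : Euc n → ℝ) : Prop :=
  (∀ k, IntegrableOn (us k) Ω volume) ∧ IntegrableOn u Ω volume ∧
    ∃ vs : ℕ → Euc n → ℝ, (∀ k, IntegrableOn (vs k) Ω volume) ∧
      (∀ k, ∀ x ∈ Ω ∩ εs k • Pset n, vs k x = us k x) ∧
      Tendsto (fun k => ∫⁻ x in Ω, ENNReal.ofReal |vs k x - u x|) atTop (𝓝 0)

/-- Sequential Γ-convergence with respect to convergence in `Ω ∩ εP`. -/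
def IsGammaLimit (Ω : Set (Euc n)) (εs : ℕ → ℝ) (F : ℕ → (Euc n → ℝ) → ℝ≥0∞)
    (G : (Euc n → ℝ) → ℝ≥0∞) : Prop :=
  ∀ u : Euc n → ℝ, IntegrableOn u Ω volume →
    (∀ us : ℕ → Euc n → ℝ, ConvPerf Ω εs us u →
      G u ≤ liminf (fun k => F k (us k)) atTop) ∧
    ∃ us : ℕ → Euc n → ℝ, ConvPerf Ω εs us u ∧
      limsup (fun k => F k (us k)) atTop ≤ G u

/-- The sequential Γ-lower limit `F'(u, U)` of the localised functionals. -/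
def GammaLB (Ω : Set (Euc n)) (εs : ℕ → ℝ)
    (F : ℕ → (Euc n → ℝ) → Set (Euc n) → ℝ≥0∞) (u : Euc n → ℝ) (U : Set (Euc n)) : ℝ≥0∞ :=
  ⨅ (us : ℕ → Euc n → ℝ) (_ : ConvPerf Ω εs us u), liminf (fun k => F k (us k) U) atTop

/-- The sequential Γ-upper limit `F''(u, U)` of the localised functionals. -/
def GammaUB (Ω : Set (Euc n)) (εs : ℕ → ℝ)
    (F : ℕ → (Euc n → ℝ) → Set (Euc n) → ℝ≥0∞) (u : Euc n → ℝ) (U : Set (Euc n)) : ℝ≥0∞ :=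
  ⨅ (us : ℕ → Euc n → ℝ) (_ : ConvPerf Ω εs us u), limsup (fun k => F k (us k) U) atTop

/-- Inner regular envelope `G₋(u, U) = sup {G(u, V) : V ⊂⊂ U}`. -/
def innerEnv (G : (Euc n → ℝ) → Set (Euc n) → ℝ≥0∞) (u : Euc n → ℝ)
    (U : Set (Euc n)) : ℝ≥0∞ :=
  ⨆ (V : Set (Euc n)) (_ : IsOpen V ∧ IsCompact (closure V) ∧ closure V ⊆ U), G u V

/-- The homogenised volume density `f̂(ξ) = inf {∫_{Q∩P} |ξ + Dw|² : w Q-periodic}`. -/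
def fhat (n : ℕ) (ξ : Euc n) : ℝ :=
  sInf {r : ℝ | ∃ w : Euc n → ℝ, ContDiff ℝ 1 w ∧
    (∀ (x : Euc n) (i : Fin n), w (x + EuclideanSpace.single i (1 : ℝ)) = w x) ∧
    r = ∫ x in cube n 1 ∩ Pset n, ‖ξ + gradient w x‖ ^ 2}

/-- `C` is a unit cube centred at the origin with one face orthogonal to `ν`. -/
def IsDirCube (n : ℕ) (ν : Euc n) (C : Set (Euc n)) : Prop :=
  ∃ O : Euc n ≃ₗᵢ[ℝ] Euc n, C = O '' cube n 1 ∧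
    ∃ i : Fin n, O (EuclideanSpace.single i (1 : ℝ)) = ν

/-- The elementary jump `u^ν_{0,z}(x) = z` if `x·ν ≥ 0`, `0` otherwise. -/
def u01 (n : ℕ) (ν : Euc n) (z : ℝ) (x : Euc n) : ℝ := if 0 ≤ (inner ℝ x ν : ℝ) then z else 0

/-- `w ∈ 𝒫(U)`: piecewise-constant `SBV` function with values in `{0,1}`. -/
def memPart01 (D : FDData n) (U : Set (Euc n)) (w : Euc n → ℝ) : Prop :=
  D.memPC U w ∧ ∀ x ∈ U, w x = 0 ∨ w x = 1

/-- `inf {H^{n-1}(S_w ∩ (Q^ν ∩ εP)) : w ∈ 𝒫(Q^ν ∩ εP), w = u^ν_{0,1} near ∂Q^ν}`. -/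
def ghApprox (D : FDData n) (ν : Euc n) (C : Set (Euc n)) (ε : ℝ) : ℝ :=
  sInf {r : ℝ | ∃ w : Euc n → ℝ, memPart01 D (C ∩ ε • Pset n) w ∧
    (∃ V : Set (Euc n), IsOpen V ∧ frontier C ⊆ V ∧ ∀ x ∈ V, w x = u01 n ν 1 x) ∧
    r = (haus n (D.jumpSet w ∩ (C ∩ ε • Pset n))).toReal}

/-- `gh` is the density `ĝ`: for every unit `ν` and unit cube `Q^ν` with a face
orthogonal to `ν`, `ĝ(ν) = lim_{ε → 0⁺}` of the minimal perimeter `ghApprox`. -/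
def IsGhat (D : FDData n) (gh : Euc n → ℝ) : Prop :=
  ∀ ν : Euc n, ‖ν‖ = 1 → ∀ C : Set (Euc n), IsDirCube n ν C →
    Tendsto (fun ε => ghApprox D ν C ε) (𝓝[>] (0 : ℝ)) (𝓝 (gh ν))

/-- Free-discontinuity functional with volume density `f` and surface density `g([u], ν_u)`. -/
def Fhom (D : FDData n) (Ω : Set (Euc n)) (f : Euc n → ℝ) (g : ℝ → Euc n → ℝ)
    (u : Euc n → ℝ) : ℝ≥0∞ :=
  if D.memGSBV2 Ω u then
    (∫⁻ x in Ω, ENNReal.ofReal (f (D.agrad u x))) +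
      ∫⁻ x in D.jumpSet u ∩ Ω, ENNReal.ofReal (g (D.jump u x) (D.normal u x)) ∂(haus n)
  else ⊤

/-- Free-discontinuity functional with volume density `f` and surface density `g(ν_u)`. -/
def FhomNu (D : FDData n) (Ω : Set (Euc n)) (f : Euc n → ℝ) (g : Euc n → ℝ)
    (u : Euc n → ℝ) : ℝ≥0∞ :=
  if D.memGSBV2 Ω u then
    (∫⁻ x in Ω, ENNReal.ofReal (f (D.agrad u x))) +
      ∫⁻ x in D.jumpSet u ∩ Ω, ENNReal.ofReal (g (D.normal u x)) ∂(haus n)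
  else ⊤

/-- The comparison surface density scaled minimisation problem defining `g^δ(z, ν)`:
`t^{1-n} inf {∫_{S_u ∩ tQ^ν} (χ_P + δ(1+|[u]|)) dH^{n-1} : u ∈ SBV^pc(tQ^ν), u = u^ν_{0,z} near ∂(tQ^ν)}`. -/
def gdeltaApprox (D : FDData n) (δ z : ℝ) (ν : Euc n) (C : Set (Euc n)) (t : ℝ) : ℝ :=
  sInf {r : ℝ | ∃ u : Euc n → ℝ, D.memPC (t • C) u ∧
    (∃ V : Set (Euc n), IsOpen V ∧ frontier (t • C) ⊆ V ∧ ∀ x ∈ V, u x = u01 n ν z x) ∧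
    r = (∫⁻ x in D.jumpSet u ∩ t • C,
          ENNReal.ofReal ((Pset n).indicator (fun _ => (1 : ℝ)) x + δ * (1 + |D.jump u x|))
            ∂(haus n)).toReal / t ^ (n - 1)}

/-- `gd` is the family of comparison surface densities `g^δ(z, ν)`. -/
def IsGdelta (D : FDData n) (gd : ℝ → ℝ → Euc n → ℝ) : Prop :=
  ∀ δ > (0 : ℝ), ∀ z : ℝ, ∀ ν : Euc n, ‖ν‖ = 1 → ∀ C : Set (Euc n), IsDirCube n ν C →
    Tendsto (fun t => gdeltaApprox D δ z ν C t) atTop (𝓝 (gd δ z ν))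

/-!
The argument is the compactness of Γ-convergence. With `d_k(u, v) = ‖u - v‖_{L¹(Ω ∩ ε_k P)}` and
`m_k(δ, u, V) = inf {F_k(v, V) : d_k(u, v) ≤ δ}`, one has `F'(u, V) ≥ sup_δ liminf_k m_k(δ, u, V)`
and `F''(u, V) ≤ sup_δ limsup_k m_k(δ, u, V)`. Since `d_k ≤ ‖·‖_{L¹(Ω)}`, balls around `u` can be
traded for balls around the points of a countable dense subset of `L¹(Ω)`, with radii `1/m`, and
every `V ⊂⊂ U` satisfies `V ⊂⊂ W ⊆ U` for one of countably many finite unions `W` of basic open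
sets. As `F_ε(u, ·)` need not be monotone in the set variable, `limsup` and `liminf` are compared
only after a supremum over all competitors `V ⊂⊂ W` of the same datum: a diagonal argument gives
one subsequence along which `sup limsup ≤ sup liminf` for each of these countably many families.
-/

theorem Filter.exists_tendsto_atTop_eventually_apply {p : ℕ → ℕ → Prop}
    (hp : ∀ m, ∀ᶠ k in atTop, p m k) :
    ∃ ι : ℕ → ℕ, Tendsto ι atTop atTop ∧ ∀ᶠ k in atTop, p (ι k) k := by
  obtain ⟨N, hN, hNp⟩ := extraction_forall_of_eventually fun m =>
    eventually_forall_ge_atTop.2 (hp m)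
  refine ⟨fun k => Nat.findGreatest (fun m => N m ≤ k) k, ?_, ?_⟩
  · exact tendsto_atTop.2 fun b => eventually_atTop.2
      ⟨N b, fun k hk => Nat.le_findGreatest ((hN.id_le b).trans hk) hk⟩
  · exact eventually_atTop.2
      ⟨N 0, fun k hk => hNp _ k (Nat.findGreatest_spec (P := fun m => N m ≤ k) (Nat.zero_le k) hk)⟩

theorem Filter.exists_strictMono_forall_of_exists_subseq {ι : Type*} [Countable ι]
    {P : ι → Filter ℕ → Prop} (hP : ∀ i F F', F' ≤ F → P i F → P i F')
    (hsub : ∀ i (g : ℕ → ℕ), ∃ ψ : ℕ → ℕ, StrictMono ψ ∧ P i (map (g ∘ ψ) atTop)) :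
    ∃ φ : ℕ → ℕ, StrictMono φ ∧ ∀ i, P i (map φ atTop) := by
  rcases isEmpty_or_nonempty ι with hι | hι
  · exact ⟨id, strictMono_id, isEmptyElim⟩
  obtain ⟨e, he⟩ := exists_surjective_nat ι
  choose ψ hψ hPψ using hsub
  let Φ : ℕ → ℕ → ℕ := fun m => Nat.rec id (fun m g => g ∘ ψ (e m) g) m
  have hΦ : ∀ m, Φ (m + 1) = Φ m ∘ ψ (e m) (Φ m) := fun _ => rfl
  have hΦmono : ∀ m, StrictMono (Φ m) := by
    intro m
    induction m with
    | zero => exact strictMono_id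
    | succ m ih => rw [hΦ]; exact ih.comp (hψ _ _)
  have hΦsub : ∀ m k, m ≤ k → ∃ ρ : ℕ → ℕ, StrictMono ρ ∧ Φ k = Φ m ∘ ρ := by
    intro m k hmk
    induction k, hmk using Nat.le_induction with
    | base => exact ⟨id, strictMono_id, rfl⟩
    | succ k _ ih =>
      obtain ⟨ρ, hρ, hk⟩ := ih
      exact ⟨ρ ∘ ψ (e k) (Φ k), hρ.comp (hψ _ _), by rw [hΦ, hk]; rfl⟩
  refine ⟨fun k => Φ (k + 1) k, strictMono_nat_of_lt_succ fun k => ?_, fun i => ?_⟩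
  · change Φ (k + 1) k < Φ (k + 1 + 1) (k + 1)
    rw [hΦ (k + 1)]
    exact hΦmono (k + 1) ((Nat.lt_succ_self k).trans_le ((hψ _ _).id_le _))
  obtain ⟨m, rfl⟩ := he i
  refine hP _ _ _ (fun s hs => ?_) (hΦ m ▸ hPψ (e m) (Φ m))
  obtain ⟨N, hN⟩ := mem_atTop_sets.1 (mem_map.1 hs)
  refine mem_map.2 (mem_atTop_sets.2 ⟨max (m + 1) N, fun k hk => ?_⟩)
  obtain ⟨ρ, hρ, hk'⟩ := hΦsub (m + 1) (k + 1) (by omega)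
  change Φ (k + 1) k ∈ s
  rw [hk']
  exact hN _ ((le_of_max_le_right hk).trans (hρ.id_le k))

theorem ENNReal.exists_strictMono_iSup_limsup_le_iSup_liminf {I : Type*} [Countable I]
    {κ : I → Type*} (S : ∀ i, κ i → ℕ → ℝ≥0∞) :
    ∃ φ : ℕ → ℕ, StrictMono φ ∧ ∀ i,
      ⨆ j, limsup (fun k => S i j (φ k)) atTop ≤ ⨆ j, liminf (fun k => S i j (φ k)) atTop := by
  obtain ⟨φ, hφ, hP⟩ := exists_strictMono_forall_of_exists_subseq
    (P := fun (iq : I × ℚ) F => ENNReal.ofReal iq.2 < ⨆ j, limsup (S iq.1 j) F →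
      ENNReal.ofReal iq.2 ≤ ⨆ j, liminf (S iq.1 j) F)
    (fun iq F F' hF h hq => (h (hq.trans_le (iSup_mono fun j => limsup_le_limsup_of_le hF))).trans
      (iSup_mono fun j => liminf_le_liminf_of_le hF))
    (fun ⟨i, q⟩ g => by
      by_cases hq : ENNReal.ofReal q < ⨆ j, limsup (fun k => S i j (g k)) atTop
      · obtain ⟨j, hj⟩ := lt_iSup_iff.1 hq
        obtain ⟨ψ, hψ, hqψ⟩ := extraction_of_frequently_atTop (frequently_lt_of_lt_limsup (h := hj))
        exact ⟨ψ, hψ, fun _ => le_iSup_of_le j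
          (le_liminf_of_le (h := eventually_map.2 (.of_forall fun t => (hqψ t).le)))⟩
      · exact ⟨id, strictMono_id, fun h => absurd h hq⟩)
  refine ⟨φ, hφ, fun i => le_of_not_gt fun hlt => ?_⟩
  obtain ⟨q, -, hBq, hqA⟩ := ENNReal.lt_iff_exists_rat_btwn.1 hlt
  exact (hP (i, q) hqA).not_gt hBq

theorem TopologicalSpace.exists_countable_forall_isCompact_subset_isOpen (X : Type*)
    [TopologicalSpace X] [SecondCountableTopology X] :
    ∃ 𝒲 : Set (Set X), 𝒲.Countable ∧ ∀ K U, IsCompact K → IsOpen U → K ⊆ U →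
      ∃ W ∈ 𝒲, K ⊆ W ∧ W ⊆ U := by
  have hB := isBasis_countableBasis X
  have hBc := Set.countable_coe_iff.1 (countable_countableBasis X)
  refine ⟨sUnion '' {t | t.Finite ∧ t ⊆ countableBasis X},
    (Set.countable_ofPred_finite_subset hBc).image _, ?_⟩
  intro K U hK hU hKU
  have hcover : K ⊆ ⋃ b ∈ {b ∈ countableBasis X | b ⊆ U}, b := by
    rw [← sUnion_eq_biUnion, ← hB.open_eq_sUnion' hU]
    exact hKU
  obtain ⟨t, htB, htfin, hKt⟩ :=
    hK.elim_finite_subcover_image (fun b hb => hB.isOpen hb.1) hcover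
  exact ⟨⋃₀ t, ⟨t, ⟨htfin, fun b hb => (htB hb).1⟩, rfl⟩, by rwa [sUnion_eq_biUnion],
    sUnion_subset fun b hb => (htB hb).2⟩

theorem MeasureTheory.exists_dense_seq_integrableOn {α : Type*} [MeasurableSpace α]
    [MeasurableSpace.CountablyGenerated α] (μ : Measure α) [SFinite μ] (Ω : Set α) :
    ∃ w : ℕ → α → ℝ, (∀ i, IntegrableOn (w i) Ω μ) ∧
      ∀ u, IntegrableOn u Ω μ → ∀ ρ > 0, ∃ i, eLpNorm (u - w i) 1 (μ.restrict Ω) < ρ := by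
  have : Fact ((1 : ℝ≥0∞) ≤ 1) := ⟨le_rfl⟩
  have : Fact ((1 : ℝ≥0∞) ≠ ∞) := ⟨ENNReal.one_ne_top⟩
  obtain ⟨f, hf⟩ := TopologicalSpace.exists_dense_seq (Lp ℝ 1 (μ.restrict Ω))
  refine ⟨fun i => f i, fun i => L1.integrable_coeFn (f i), fun u hu ρ hρ => ?_⟩
  obtain ⟨-, ⟨i, rfl⟩, hi⟩ := EMetric.mem_closure_iff.1 (hf (hu.toL1 u)) ρ hρ
  refine ⟨i, ?_⟩
  rwa [Lp.edist_def, eLpNorm_congr_ae (hu.coeFn_toL1.sub (EventuallyEq.refl _ _))] at hi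

namespace MeasureTheory

theorem eLpNorm_one_sub_le_add {α : Type*} [MeasurableSpace α] {μ : Measure α} {f g h : α → ℝ}
    (hf : AEStronglyMeasurable f μ) (hg : AEStronglyMeasurable g μ)
    (hh : AEStronglyMeasurable h μ) :
    eLpNorm (f - h) 1 μ ≤ eLpNorm (f - g) 1 μ + eLpNorm (g - h) 1 μ := by
  simpa only [sub_add_sub_cancel] using eLpNorm_add_le (hf.sub hg) (hg.sub hh) le_rfl

theorem lintegral_ofReal_abs_sub_eq_eLpNorm {α : Type*} [MeasurableSpace α] {μ : Measure α}
    (s : Set α) (f g : α → ℝ) :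
    ∫⁻ x in s, ENNReal.ofReal |f x - g x| ∂μ = eLpNorm (f - g) 1 (μ.restrict s) := by
  simp [eLpNorm_one_eq_lintegral_enorm, Real.enorm_eq_ofReal_abs]

section NbhdGamma

variable {α : Type*} [MeasurableSpace α] (μ : Measure α) (Ω : Set α) (A : ℕ → Set α)
  (G : ℕ → (α → ℝ) → Set α → ℝ≥0∞)

def infNbhd (k : ℕ) (δ : ℝ≥0∞) (u : α → ℝ) (V : Set α) : ℝ≥0∞ :=
  ⨅ (v : α → ℝ) (_ : IntegrableOn v Ω μ ∧ eLpNorm (u - v) 1 (μ.restrict (A k)) ≤ δ), G k v V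

def nbhdGammaLiminf (u : α → ℝ) (V : Set α) : ℝ≥0∞ :=
  ⨆ (δ : ℝ≥0∞) (_ : 0 < δ), liminf (fun k => infNbhd μ Ω A G k δ u V) atTop

def nbhdGammaLimsup (u : α → ℝ) (V : Set α) : ℝ≥0∞ :=
  ⨆ (δ : ℝ≥0∞) (_ : 0 < δ), limsup (fun k => infNbhd μ Ω A G k δ u V) atTop

variable {μ Ω A G}

theorem infNbhd_le_infNbhd {k : ℕ} (hA : A k ⊆ Ω) {δ δ' : ℝ≥0∞} {u w : α → ℝ}
    (hu : IntegrableOn u Ω μ) (hw : IntegrableOn w Ω μ)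
    (h : δ' + eLpNorm (u - w) 1 (μ.restrict Ω) ≤ δ) (V : Set α) :
    infNbhd μ Ω A G k δ u V ≤ infNbhd μ Ω A G k δ' w V := by
  refine le_iInf₂ fun v ⟨hv, hwv⟩ => iInf₂_le v ⟨hv, ?_⟩
  calc eLpNorm (u - v) 1 (μ.restrict (A k))
      ≤ eLpNorm (u - w) 1 (μ.restrict (A k)) + eLpNorm (w - v) 1 (μ.restrict (A k)) :=
        eLpNorm_one_sub_le_add (hu.mono_set hA).1 (hw.mono_set hA).1 (hv.mono_set hA).1
    _ ≤ eLpNorm (u - w) 1 (μ.restrict Ω) + δ' :=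
        add_le_add (eLpNorm_mono_measure _ (Measure.restrict_mono hA le_rfl)) hwv
    _ ≤ δ := by rwa [add_comm]

theorem nbhdGammaLiminf_le_liminf {us : ℕ → α → ℝ} {u : α → ℝ}
    (hus : ∀ k, IntegrableOn (us k) Ω μ)
    (hlim : Tendsto (fun k => eLpNorm (u - us k) 1 (μ.restrict (A k))) atTop (𝓝 0))
    (V : Set α) : nbhdGammaLiminf μ Ω A G u V ≤ liminf (fun k => G k (us k) V) atTop :=
  iSup₂_le fun _ hδ => liminf_le_liminf ((hlim.eventually_lt_const hδ).mono fun k hk =>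
    iInf₂_le (us k) ⟨hus k, hk.le⟩)

theorem exists_limsup_le_of_nbhdGammaLimsup_lt {u : α → ℝ} (hu : IntegrableOn u Ω μ)
    {V : Set α} {c : ℝ≥0∞} (hc : nbhdGammaLimsup μ Ω A G u V < c) :
    ∃ us : ℕ → α → ℝ, (∀ k, IntegrableOn (us k) Ω μ) ∧
      Tendsto (fun k => eLpNorm (u - us k) 1 (μ.restrict (A k))) atTop (𝓝 0) ∧
      limsup (fun k => G k (us k) V) atTop ≤ c := by
  have hev : ∀ m : ℕ, ∀ᶠ k in atTop, infNbhd μ Ω A G k (m : ℝ≥0∞)⁻¹ u V < c := fun m =>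
    eventually_lt_of_limsup_lt (lt_of_le_of_lt
      (le_iSup₂_of_le _ (ENNReal.inv_pos.2 (ENNReal.natCast_ne_top m)) le_rfl) hc)
  obtain ⟨ι, hι, hιc⟩ := exists_tendsto_atTop_eventually_apply hev
  have hpick : ∀ k, ∃ v, (IntegrableOn v Ω μ ∧
      eLpNorm (u - v) 1 (μ.restrict (A k)) ≤ (ι k : ℝ≥0∞)⁻¹) ∧
      (infNbhd μ Ω A G k (ι k : ℝ≥0∞)⁻¹ u V < c → G k v V < c) := by
    intro k
    by_cases hk : infNbhd μ Ω A G k (ι k : ℝ≥0∞)⁻¹ u V < c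
    · obtain ⟨v, hv⟩ := iInf_lt_iff.1 hk
      obtain ⟨hvF, hvc⟩ := iInf_lt_iff.1 hv
      exact ⟨v, hvF, fun _ => hvc⟩
    · exact ⟨u, ⟨hu, by simp⟩, fun h => absurd h hk⟩
  choose us hus hGus using hpick
  refine ⟨us, fun k => (hus k).1, ?_, ?_⟩
  · exact tendsto_of_tendsto_of_tendsto_of_le_of_le tendsto_const_nhds
      (ENNReal.tendsto_inv_nat_nhds_zero.comp hι) (fun _ => zero_le) fun k => (hus k).2
  · exact limsup_le_of_le (h := hιc.mono fun k hk => (hGus k hk).le)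

theorem liminf_infNbhd_le_nbhdGammaLiminf (hA : ∀ k, A k ⊆ Ω) {u w : α → ℝ}
    (hu : IntegrableOn u Ω μ) (hw : IntegrableOn w Ω μ) {δ : ℝ≥0∞}
    (h : eLpNorm (w - u) 1 (μ.restrict Ω) < δ) (V : Set α) :
    liminf (fun k => infNbhd μ Ω A G k δ w V) atTop ≤ nbhdGammaLiminf μ Ω A G u V :=
  le_iSup₂_of_le _ (tsub_pos_of_lt h) <| liminf_le_liminf <| .of_forall fun k =>
    infNbhd_le_infNbhd (hA k) hw hu (tsub_add_cancel_of_le h.le).le V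

theorem exists_strictMono_iSup_nbhdGammaLimsup_le {T : Type*} [Countable T]
    (𝒱 : T → Set (Set α)) (hA : ∀ k, A k ⊆ Ω) {w : ℕ → α → ℝ}
    (hw : ∀ i, IntegrableOn (w i) Ω μ)
    (hdense : ∀ u, IntegrableOn u Ω μ → ∀ ρ > 0, ∃ i, eLpNorm (u - w i) 1 (μ.restrict Ω) < ρ) :
    ∃ φ : ℕ → ℕ, StrictMono φ ∧ ∀ t u, IntegrableOn u Ω μ →
      ⨆ V ∈ 𝒱 t, nbhdGammaLimsup μ Ω (fun k => A (φ k)) (fun k => G (φ k)) u V ≤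
        ⨆ V ∈ 𝒱 t, nbhdGammaLiminf μ Ω (fun k => A (φ k)) (fun k => G (φ k)) u V := by
  -- Competitors of the datum (centre `w i`, radius `m⁻¹`, family `𝒱 t`): triples `(i', δ', V')`
  -- with `V' ∈ 𝒱 t` whose `δ'`-ball around `w i'` contains the `m⁻¹`-ball around `w i`.
  let κ : ℕ × ℕ × T → Type _ := fun p => {j : ℕ × ℝ≥0∞ × Set α // j.2.2 ∈ 𝒱 p.2.2 ∧
    (p.2.1 : ℝ≥0∞)⁻¹ + eLpNorm (w p.1 - w j.1) 1 (μ.restrict Ω) < j.2.1}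
  let S : ∀ p, κ p → ℕ → ℝ≥0∞ := fun _ j k => infNbhd μ Ω A G k j.1.2.1 (w j.1.1) j.1.2.2
  obtain ⟨φ, hφ, hgame⟩ := ENNReal.exists_strictMono_iSup_limsup_le_iSup_liminf S
  refine ⟨φ, hφ, fun t u hu => iSup₂_le fun V hV => iSup₂_le fun δ hδ => ?_⟩
  obtain ⟨m, hm⟩ := ENNReal.exists_inv_nat_lt (ENNReal.half_pos hδ.ne').ne'
  obtain ⟨i, hi⟩ := hdense u hu _ (ENNReal.inv_pos.2 (ENNReal.natCast_ne_top m))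
  have hmδ : (m : ℝ≥0∞)⁻¹ + (m : ℝ≥0∞)⁻¹ < δ :=
    (ENNReal.add_lt_add hm hm).trans_eq (ENNReal.add_halves δ)
  have hV' : V ∈ 𝒱 (i, m, t).2.2 ∧ ((i, m, t).2.1 : ℝ≥0∞)⁻¹ +
      eLpNorm (w i - w i) 1 (μ.restrict Ω) < δ - (m : ℝ≥0∞)⁻¹ := by
    refine ⟨hV, ?_⟩
    rw [sub_self, eLpNorm_zero, add_zero]
    exact lt_tsub_iff_right.2 hmδ
  calc limsup (fun k => infNbhd μ Ω A G (φ k) δ u V) atTop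
      ≤ limsup (fun k => infNbhd μ Ω A G (φ k) (δ - (m : ℝ≥0∞)⁻¹) (w i) V) atTop :=
        limsup_le_limsup <| .of_forall fun k => infNbhd_le_infNbhd (hA _) hu (hw i)
          ((add_le_add le_rfl hi.le).trans (tsub_add_cancel_of_le (le_self_add.trans hmδ.le)).le) V
    _ ≤ ⨆ j, limsup (fun k => S (i, m, t) j (φ k)) atTop :=
        le_iSup_of_le ⟨(i, δ - (m : ℝ≥0∞)⁻¹, V), hV'⟩ le_rfl
    _ ≤ ⨆ j, liminf (fun k => S (i, m, t) j (φ k)) atTop :=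
        hgame (i, m, t)
    _ ≤ _ := by
      refine iSup_le fun ⟨⟨i', δ', V'⟩, hV'𝒱, hδ'⟩ => le_iSup₂_of_le V' hV'𝒱 ?_
      refine liminf_infNbhd_le_nbhdGammaLiminf (fun k => hA (φ k)) hu (hw i') ?_ V'
      calc eLpNorm (w i' - u) 1 (μ.restrict Ω)
          ≤ eLpNorm (w i' - w i) 1 (μ.restrict Ω) + eLpNorm (w i - u) 1 (μ.restrict Ω) :=
            eLpNorm_one_sub_le_add (hw i').1 (hw i).1 hu.1
        _ ≤ eLpNorm (w i - w i') 1 (μ.restrict Ω) + (m : ℝ≥0∞)⁻¹ := by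
            rw [eLpNorm_sub_comm (w i') (w i), eLpNorm_sub_comm (w i) u]
            exact add_le_add le_rfl hi.le
        _ < δ' := by rwa [add_comm]

end NbhdGamma

end MeasureTheory

theorem isClosed_Pset (n : ℕ) : IsClosed (Pset n) := by
  simp only [Pset, ofPred_forall, ofPred_exists]
  exact isClosed_iInter fun k => isClosed_iUnion_of_finite fun i =>
    isClosed_le continuous_const (by fun_prop)

theorem convPerf_iff {Ω : Set (Euc n)} (hΩ : MeasurableSet Ω) {εs : ℕ → ℝ}
    {us : ℕ → Euc n → ℝ} {u : Euc n → ℝ} :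
    ConvPerf Ω εs us u ↔ (∀ k, IntegrableOn (us k) Ω volume) ∧ IntegrableOn u Ω volume ∧
      Tendsto (fun k => eLpNorm (u - us k) 1 (volume.restrict (Ω ∩ εs k • Pset n)))
        atTop (𝓝 0) := by
  have hP : ∀ k, MeasurableSet (εs k • Pset n) := fun k =>
    ((isClosed_Pset n).smul₀ (εs k)).measurableSet
  simp only [ConvPerf, lintegral_ofReal_abs_sub_eq_eLpNorm]
  refine ⟨fun ⟨hus, hu, vs, _, hvs, hlim⟩ => ⟨hus, hu, ?_⟩, fun ⟨hus, hu, hlim⟩ => ⟨hus, hu, ?_⟩⟩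
  · refine tendsto_of_tendsto_of_tendsto_of_le_of_le tendsto_const_nhds hlim
      (fun _ => zero_le) fun k => ?_
    calc eLpNorm (u - us k) 1 (volume.restrict (Ω ∩ εs k • Pset n))
        = eLpNorm (vs k - u) 1 (volume.restrict (Ω ∩ εs k • Pset n)) := by
          rw [eLpNorm_sub_comm]
          exact eLpNorm_congr_ae ((ae_restrict_mem (hΩ.inter (hP k))).mono
            fun x hx => by simp [hvs k x hx])
      _ ≤ eLpNorm (vs k - u) 1 (volume.restrict Ω) :=
          eLpNorm_mono_measure _ (Measure.restrict_mono inter_subset_left le_rfl)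
  · refine ⟨fun k => u + (εs k • Pset n).indicator (us k - u),
      fun k => hu.add (((hus k).sub hu).indicator (hP k)), fun k x hx => ?_, ?_⟩
    · simp [indicator_of_mem hx.2]
    · simpa [eLpNorm_indicator_eq_eLpNorm_restrict (hP _), Measure.restrict_restrict (hP _),
        inter_comm Ω, eLpNorm_sub_comm (us _)] using hlim

theorem nbhdGammaLiminf_le_GammaLB {Ω : Set (Euc n)} (hΩ : MeasurableSet Ω) (εs : ℕ → ℝ)
    (F : ℕ → (Euc n → ℝ) → Set (Euc n) → ℝ≥0∞) (u : Euc n → ℝ) (V : Set (Euc n)) :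
    nbhdGammaLiminf volume Ω (fun k => Ω ∩ εs k • Pset n) F u V ≤ GammaLB Ω εs F u V :=
  le_iInf₂ fun _ hus =>
    let ⟨hus', _, hlim⟩ := (convPerf_iff hΩ).1 hus
    nbhdGammaLiminf_le_liminf hus' hlim V

theorem GammaUB_le_nbhdGammaLimsup {Ω : Set (Euc n)} (hΩ : MeasurableSet Ω) (εs : ℕ → ℝ)
    (F : ℕ → (Euc n → ℝ) → Set (Euc n) → ℝ≥0∞) {u : Euc n → ℝ} (hu : IntegrableOn u Ω volume)
    (V : Set (Euc n)) :
    GammaUB Ω εs F u V ≤ nbhdGammaLimsup volume Ω (fun k => Ω ∩ εs k • Pset n) F u V :=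
  le_of_forall_gt_imp_ge_of_dense fun _ hc =>
    let ⟨us, hus, hlim, hle⟩ := exists_limsup_le_of_nbhdGammaLimsup_lt hu hc
    (iInf₂_le us ((convPerf_iff hΩ).2 ⟨hus, hu, hlim⟩)).trans hle

theorem innerEnv_GammaLB_le_innerEnv_GammaUB (Ω : Set (Euc n)) (εs : ℕ → ℝ)
    (F : ℕ → (Euc n → ℝ) → Set (Euc n) → ℝ≥0∞) (u : Euc n → ℝ) (U : Set (Euc n)) :
    innerEnv (GammaLB Ω εs F) u U ≤ innerEnv (GammaUB Ω εs F) u U :=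
  iSup₂_mono fun _ _ => iInf₂_mono fun _ _ => liminf_le_limsup

theorem statement_3_general
    (n : ℕ)
    (Ω : Set (Euc n)) (hΩo : IsOpen Ω) (D : FDData n)
    (β : ℝ → ℝ)
    (εs : ℕ → ℝ) :
    ∃ φ : ℕ → ℕ, StrictMono φ ∧
      ∀ u : Euc n → ℝ, IntegrableOn u Ω volume → ∀ U : Set (Euc n), IsOpen U → U ⊆ Ω →
        innerEnv (GammaLB Ω (fun k => εs (φ k))
            (fun k v W => FepsLoc D (β (εs (φ k))) (εs (φ k)) v W)) u U
          = innerEnv (GammaUB Ω (fun k => εs (φ k))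
            (fun k v W => FepsLoc D (β (εs (φ k))) (εs (φ k)) v W)) u U := by
  obtain ⟨𝒲, h𝒲, h𝒲K⟩ :=
    TopologicalSpace.exists_countable_forall_isCompact_subset_isOpen (Euc n)
  have := h𝒲.to_subtype
  obtain ⟨w, hw, hdense⟩ := exists_dense_seq_integrableOn volume Ω
  obtain ⟨φ, hφ, hcomp⟩ := exists_strictMono_iSup_nbhdGammaLimsup_le
    (A := fun k => Ω ∩ εs k • Pset n) (G := fun k v W => FepsLoc D (β (εs k)) (εs k) v W)
    (fun W : 𝒲 => {V | IsOpen V ∧ IsCompact (closure V) ∧ closure V ⊆ W})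
    (fun k => inter_subset_left) hw hdense
  refine ⟨φ, hφ, fun u hu U hU _ =>
    (innerEnv_GammaLB_le_innerEnv_GammaUB _ _ _ u U).antisymm (iSup₂_le fun V hV => ?_)⟩
  obtain ⟨W, hW𝒲, hVW, hWU⟩ := h𝒲K _ U hV.2.1 hU hV.2.2
  refine (GammaUB_le_nbhdGammaLimsup hΩo.measurableSet _ _ hu V).trans <|
    (le_iSup₂_of_le V ⟨hV.1, hV.2.1, hVW⟩ le_rfl).trans <|
    (hcomp ⟨W, hW𝒲⟩ u hu).trans <|
    iSup₂_le fun V' hV' => (nbhdGammaLiminf_le_GammaLB hΩo.measurableSet _ _ u V').trans <|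
      le_iSup₂_of_le V' ⟨hV'.1, hV'.2.1, hV'.2.2.trans hWU⟩ le_rfl

/-- compactness: coincidence of the inner regular envelopes. -/
theorem statement_3
    (n : ℕ) (hn : 2 ≤ n)
    (Ω : Set (Euc n)) (hΩo : IsOpen Ω) (hΩb : Bornology.IsBounded Ω)
    (hΩl : IsLipschitzDomain n Ω) (D : FDData n)
    (β : ℝ → ℝ) (hβpos : ∀ ε : ℝ, 0 < ε → 0 < β ε)
    (hβ0 : Tendsto β (𝓝[>] (0 : ℝ)) (𝓝 0))
    (εs : ℕ → ℝ) (hεpos : ∀ k, 0 < εs k) (hεanti : StrictAnti εs)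
    (hεlim : Tendsto εs atTop (𝓝 0)) :
    ∃ φ : ℕ → ℕ, StrictMono φ ∧
      ∀ u : Euc n → ℝ, IntegrableOn u Ω volume → ∀ U : Set (Euc n), IsOpen U → U ⊆ Ω →
        innerEnv (GammaLB Ω (fun k => εs (φ k))
            (fun k v W => FepsLoc D (β (εs (φ k))) (εs (φ k)) v W)) u U
          = innerEnv (GammaUB Ω (fun k => εs (φ k))
            (fun k v W => FepsLoc D (β (εs (φ k))) (εs (φ k)) v W)) u U :=
  statement_3_general n Ω hΩo D β εs
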